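/- arXiv:2510.12092 — 9 statements merged into one kernel-verified Lean document; each statement's English description precedes it below -/
import Mathlib

section
/- Let a, b be coprime integers with a + b ≠ 0 and 13 ∣ a + b. Then 13 divides φ₁₃(a,b) = (a^13 + b^13)/(a + b) exactly once, i.e., 13 ∣ φ₁₃(a,b) but 13² ∤ φ₁₃(a,b). -/
/-- For coprime integers `a, b` with `a + b ≠ 0` and `13 ∣ a + b`, `13` divides
`φ₁₃(a,b) = (a^13 + b^13)/(a+b)` exactly once. -/
theorem thirteen_exactly_divides_phi13
    (a b phi : ℤ) (hab : IsCoprime a b) (hne : a + b ≠ 0)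
    (hphi : (a + b) * phi = a ^ 13 + b ^ 13) (h13 : (13 : ℤ) ∣ a + b) :
    (13 : ℤ) ∣ phi ∧ ¬ (13 : ℤ) ^ 2 ∣ phi := by
  obtain ⟨k, hk⟩ := h13
  have hb : b = 13 * k - a := by linarith
  have hkne : (13 : ℤ) * k ≠ 0 := hk ▸ hne
  set R : ℤ := -6 * k * a^11 + 286 * k^2 * a^10 - 9295 * k^3 * a^9
      + 217503 * k^4 * a^8 - 3770052 * k^5 * a^7 + 49010676 * k^6 * a^6
      - 477854091 * k^7 * a^5 + 3451168435 * k^8 * a^4 - 17946075862 * k^9 * a^3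
      + 63626996238 * k^10 * a^2 - 137858491849 * k^11 * a
      + 137858491849 * k^12 with hR
  have hphi' : phi = 13 * a ^ 12 + 169 * R := by
    have h : (13 * k) * phi = (13 * k) * (13 * a ^ 12 + 169 * R) := by
      rw [← hk, hphi, hb, hR]; ring
    exact mul_left_cancel₀ hkne h
  have hna : ¬ (13 : ℤ) ∣ a := by
    intro ha
    have hdb : (13 : ℤ) ∣ b := by
      have : (13 : ℤ) ∣ a + b - a := dvd_sub (hk ▸ Dvd.intro k rfl) ha
      simpa using this
    exact absurd (hab.isUnit_of_dvd' ha hdb) (by decide)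
  constructor
  · exact hphi' ▸ ⟨a ^ 12 + 13 * R, by ring⟩
  · intro hdvd
    rw [hphi'] at hdvd
    obtain ⟨c, hc⟩ := hdvd
    have h13a : (13 : ℤ) ∣ a ^ 12 := ⟨c - R, by linarith⟩
    exact hna ((Int.Prime.dvd_pow' (by norm_num) h13a))
end

section
/- Let p be a prime with p ∤ 13 and p ≢ 1 (mod 13), and let a, b be coprime integers with a + b ≠ 0. Then p does not divide φ₁₃(a,b) = (a^13 + b^13)/(a + b). -/
/-- If `p` is a prime with `p ≠ 13` and `p ≢ 1 (mod 13)`, and `a, b` are coprime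
integers with `a + b ≠ 0`, then `p` does not divide `φ₁₃(a,b) = (a^13 + b^13)/(a+b)`. -/
theorem prime_not_dvd_phi13
    (a b phi : ℤ) (hab : IsCoprime a b) (hne : a + b ≠ 0)
    (hphi : (a + b) * phi = a ^ 13 + b ^ 13)
    (p : ℕ) (hp : p.Prime) (hp13 : p ≠ 13) (hpmod : p % 13 ≠ 1) :
    ¬ (p : ℤ) ∣ phi := by
  intro hdvd
  haveI : Fact p.Prime := ⟨hp⟩
  have hpz : Prime (p : ℤ) := Nat.prime_iff_prime_int.mp hp
  have h13 : (p : ℤ) ∣ a ^ 13 + b ^ 13 := hphi ▸ hdvd.mul_left _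
  have hpa : ¬ (p : ℤ) ∣ a := by
    intro ha
    have hb : (p : ℤ) ∣ b := by
      have : (p : ℤ) ∣ b ^ 13 := by
        have := dvd_sub h13 (dvd_pow ha (by norm_num : (13:ℕ) ≠ 0))
        simpa using this
      exact hpz.dvd_of_dvd_pow this
    exact hpz.not_unit (hab.isUnit_of_dvd' ha hb)
  have hpb : ¬ (p : ℤ) ∣ b := by
    intro hb
    have ha : (p : ℤ) ∣ a := by
      have : (p : ℤ) ∣ a ^ 13 := by
        have := dvd_sub h13 (dvd_pow hb (by norm_num : (13:ℕ) ≠ 0))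
        simpa using this
      exact hpz.dvd_of_dvd_pow this
    exact hpz.not_unit (hab.isUnit_of_dvd' ha hb)
  -- now in ZMod p
  have ha0 : (a : ZMod p) ≠ 0 := by
    rwa [Ne, ZMod.intCast_zmod_eq_zero_iff_dvd]
  have hb0 : (b : ZMod p) ≠ 0 := by
    rwa [Ne, ZMod.intCast_zmod_eq_zero_iff_dvd]
  have hsum : (a : ZMod p) ^ 13 + (b : ZMod p) ^ 13 = 0 := by
    have := (ZMod.intCast_zmod_eq_zero_iff_dvd _ p).2 h13
    push_cast at this
    exact this
  -- the element x = -a/b has x^13 = 1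
  set x : ZMod p := -(a : ZMod p) / (b : ZMod p) with hx
  have hx13 : x ^ 13 = 1 := by
    rw [hx, div_pow, show (-(a:ZMod p))^13 = -(a:ZMod p)^13 by ring,
      show -(a:ZMod p)^13 = (b:ZMod p)^13 by linear_combination -hsum,
      div_self (pow_ne_zero _ hb0)]
  have hx0 : x ≠ 0 := by
    simp [hx, ha0, hb0, div_eq_zero_iff]
  set u : (ZMod p)ˣ := Units.mk0 x hx0 with hu
  have hu13 : u ^ 13 = 1 := by
    ext
    simpa [hu] using hx13
  have hord : orderOf u ∣ 13 := orderOf_dvd_of_pow_eq_one hu13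
  have hord2 : orderOf u = 1 ∨ orderOf u = 13 :=
    (Nat.dvd_prime (by norm_num)).1 hord
  have hord1 : orderOf u = 1 := by
    rcases hord2 with h | h
    · exact h
    · exfalso
      have hcard : orderOf u ∣ p - 1 := by
        have := orderOf_dvd_card (x := u)
        rwa [ZMod.card_units_eq_totient, Nat.totient_prime hp] at this
      rw [h] at hcard
      have hp2 : 2 ≤ p := hp.two_le
      obtain ⟨k, hk⟩ := hcard
      omega
  have hxeq : x = 1 := by
    have := orderOf_eq_one_iff.1 hord1
    have : u = 1 := this
    simpa [hu, Units.ext_iff] using this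
  -- hence p ∣ a + b
  have hab0 : ((a : ZMod p) + b) = 0 := by
    have h1 : -(a : ZMod p) = b := (div_eq_one_iff_eq hb0).1 hxeq
    linear_combination -h1
  have hpab : (p : ℤ) ∣ a + b := by
    rw [← ZMod.intCast_zmod_eq_zero_iff_dvd]
    push_cast
    exact hab0
  -- key polynomial identity
  have key : a ^ 13 + b ^ 13 = (a + b) * (13 * a ^ 12) +
      (a + b) ^ 2 * (b^11 - 2*a*b^10 + 3*a^2*b^9 - 4*a^3*b^8 + 5*a^4*b^7
        - 6*a^5*b^6 + 7*a^6*b^5 - 8*a^7*b^4 + 9*a^8*b^3 - 10*a^9*b^2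
        + 11*a^10*b - 12*a^11) := by ring
  set Q : ℤ := b^11 - 2*a*b^10 + 3*a^2*b^9 - 4*a^3*b^8 + 5*a^4*b^7
        - 6*a^5*b^6 + 7*a^6*b^5 - 8*a^7*b^4 + 9*a^8*b^3 - 10*a^9*b^2
        + 11*a^10*b - 12*a^11 with hQ
  have hphi2 : phi = 13 * a ^ 12 + (a + b) * Q := by
    have h := hphi.trans key
    have : (a + b) * phi = (a + b) * (13 * a ^ 12 + (a + b) * Q) := by
      rw [h]; ring
    exact mul_left_cancel₀ hne this
  have hdvd13 : (p : ℤ) ∣ 13 * a ^ 12 := by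
    have : (p : ℤ) ∣ phi - (a + b) * Q := dvd_sub hdvd (hpab.mul_right _)
    rwa [hphi2, add_sub_cancel_right] at this
  rcases hpz.dvd_mul.1 hdvd13 with h | h
  · have h' : p ∣ 13 := Int.ofNat_dvd.1 (by exact_mod_cast h)
    exact hp13 ((Nat.prime_dvd_prime_iff_eq hp (by norm_num)).1 h')
  · exact hpa (hpz.dvd_of_dvd_pow h)
end

section
/- Let ρ satisfy ρ³ + ρ² − 4ρ + 1 = 0 and work in K = ℚ(ρ). Define F(x,y) = x⁴ + ρx³y + (ρ²+ρ−1)x²y² + ρxy³ + y⁴, G(x,y) = x + y, H(x,y) = x² + (1/5)(−2ρ² + 8)xy + y², and d = 1/(4ρ²). Then the identity (1 + d)·H(x,y)² = F(x,y) + d·G(x,y)⁴ holds in K[x,y]. -/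
/-! Both sides are symmetric quartic forms with the same `x⁴` and `y⁴` coefficients `1 + d`,
so the identity reduces to the equality of the `x³y` and `x²y²` coefficients. After clearing
the denominators `5` and `4ρ²`, each of these is a polynomial in `ρ` divisible by
`ρ³ + ρ² − 4ρ + 1`. -/

section

variable {K : Type*} [Field K] {ρ : K}

theorem ne_zero_of_cubic_eq_zero (hρ : ρ ^ 3 + ρ ^ 2 - 4 * ρ + 1 = 0) : ρ ≠ 0 := by
  rintro rfl
  norm_num at hρ

variable [CharZero K]

theorem FGH_coeff_x3y_eq (hρ : ρ ^ 3 + ρ ^ 2 - 4 * ρ + 1 = 0) :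
    (1 + 1 / (4 * ρ ^ 2)) * (2 * ((1 / 5) * (-2 * ρ ^ 2 + 8))) = ρ + 4 * (1 / (4 * ρ ^ 2)) := by
  have hρ0 := ne_zero_of_cubic_eq_zero hρ
  field_simp
  linear_combination (-4 - 16 * ρ) * hρ

theorem FGH_coeff_x2y2_eq (hρ : ρ ^ 3 + ρ ^ 2 - 4 * ρ + 1 = 0) :
    (1 + 1 / (4 * ρ ^ 2)) * (2 + ((1 / 5) * (-2 * ρ ^ 2 + 8)) ^ 2) =
      ρ ^ 2 + ρ - 1 + 6 * (1 / (4 * ρ ^ 2)) := by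
  have hρ0 := ne_zero_of_cubic_eq_zero hρ
  field_simp
  linear_combination (-36 - 144 * ρ - 16 * ρ ^ 2 + 16 * ρ ^ 3) * hρ

end

/-- With `ρ` a root of `t³ + t² − 4t + 1`, setting
`F = x⁴ + ρx³y + (ρ²+ρ−1)x²y² + ρxy³ + y⁴`, `G = x + y`,
`H = x² + (1/5)(−2ρ² + 8)xy + y²` and `d = 1/(4ρ²)`, we have
`(1 + d)·H² = F + d·G⁴`. -/
theorem FGH_identity
    {K : Type*} [Field K] [CharZero K] (ρ : K)
    (hρ : ρ ^ 3 + ρ ^ 2 - 4 * ρ + 1 = 0) (x y : K) :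
    (1 + 1 / (4 * ρ ^ 2)) * (x ^ 2 + (1 / 5) * (-2 * ρ ^ 2 + 8) * x * y + y ^ 2) ^ 2 =
      (x ^ 4 + ρ * x ^ 3 * y + (ρ ^ 2 + ρ - 1) * x ^ 2 * y ^ 2 + ρ * x * y ^ 3 + y ^ 4)
        + (1 / (4 * ρ ^ 2)) * (x + y) ^ 4 := by
  linear_combination (x ^ 3 * y + x * y ^ 3) * FGH_coeff_x3y_eq hρ
    + x ^ 2 * y ^ 2 * FGH_coeff_x2y2_eq hρ
end

section
/- Let ζ be a primitive 13th root of unity and let K be the cubic subfield of L = ℚ(ζ), generated by ρ = ζ + ζ⁻¹ + ζ⁵ + ζ⁻⁵. Then the norm from L to K of the unit μ₀ = 13/(1 − ζ)^12 equals (ρ(1 − ρ))^{−8}. -/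
/-!
Write `ρ = ζ + ζ⁻¹ + ζ⁵ + ζ⁻⁵` and `K = ℚ(ρ)`. As `ρ` is a root of the irreducible cubic
`X³ + X² - 4X + 1`, `[K : ℚ] = 3` and `[ℚ(ζ) : K] = 4`. The element `1 - ζ` generates `ℚ(ζ)` over
`K` and is a root of an explicit monic quartic over `K`, which is therefore its minimal polynomial;
its constant term gives `N(1 - ζ) = ρ² - ρ + 1`.
Hence `N(13 / (1 - ζ)¹²) = 13⁴ / (ρ² - ρ + 1)¹²`, and the cubic relation
`(ρ² - ρ + 1)³ = 13 (ρ(1 - ρ))²` turns this into `(ρ(1 - ρ))⁻⁸`.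
-/

open IntermediateField Polynomial

theorem Algebra.norm_eq_coeff_zero_of_adjoin_eq_top {K L : Type*} [Field K] [Field L]
    [Algebra K L] {x : L} (hx : Algebra.adjoin K {x} = ⊤) {Q : K[X]} (hQ : Q.Monic)
    (hQx : aeval x Q = 0) (hdeg : Q.natDegree = Module.finrank K L) :
    Algebra.norm K x = (-1) ^ Q.natDegree * Q.coeff 0 := by
  have hint : IsIntegral K x := ⟨Q, hQ, hQx⟩
  let pb := PowerBasis.ofAdjoinEqTop hint hx
  have hmin : Q = minpoly K x := by
    refine minpoly.unique_of_degree_le_degree_minpoly K x hQ hQx ?_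
    rw [degree_eq_natDegree hQ.ne_zero, degree_eq_natDegree (minpoly.ne_zero hint), hdeg,
      pb.finrank, PowerBasis.ofAdjoinEqTop_dim]
  rw [← PowerBasis.ofAdjoinEqTop_gen hint hx, Algebra.PowerBasis.norm_gen_eq_coeff_zero_minpoly,
    PowerBasis.ofAdjoinEqTop_gen, PowerBasis.ofAdjoinEqTop_dim, hmin]

theorem Algebra.adjoin_one_sub_eq_top {R K A : Type*} [CommRing R] [CommRing K] [CommRing A]
    [Algebra R K] [Algebra K A] [Algebra R A] [IsScalarTower R K A] {x : A}
    (hx : Algebra.adjoin R {x} = ⊤) : Algebra.adjoin K {1 - x} = ⊤ := by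
  have hmem : x ∈ Algebra.adjoin K {1 - x} := by
    simpa using sub_mem (one_mem _) (Algebra.self_mem_adjoin_singleton K (1 - x))
  refine Algebra.eq_top_iff.mpr fun y => ?_
  have hle : Algebra.adjoin R {x} ≤ (Algebra.adjoin K {1 - x}).restrictScalars R :=
    Algebra.adjoin_le (Set.singleton_subset_iff.mpr hmem)
  exact hle (hx ▸ Algebra.mem_top)

noncomputable def periodCubic : ℚ[X] := X ^ 3 + X ^ 2 - 4 * X + 1

theorem monic_periodCubic : periodCubic.Monic := by
  unfold periodCubic; monicity!

theorem natDegree_periodCubic : periodCubic.natDegree = 3 := by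
  unfold periodCubic; compute_degree!

theorem irreducible_periodCubic : Irreducible periodCubic := by
  rw [monic_periodCubic.irreducible_iff_roots_eq_zero_of_degree_le_three
    (by rw [natDegree_periodCubic]; omega) natDegree_periodCubic.le,
    Multiset.eq_zero_iff_forall_notMem]
  intro x hx
  have hroot : x ^ 3 + x ^ 2 - 4 * x + 1 = 0 := by
    simpa [periodCubic] using (mem_roots monic_periodCubic.ne_zero).mp hx
  have hint : IsIntegral ℤ x := by
    refine ⟨X ^ 3 + X ^ 2 - 4 * X + 1, by monicity!, ?_⟩
    simpa [eval₂_eq_eval_map] using hroot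
  obtain ⟨n, rfl⟩ := IsIntegrallyClosed.isIntegral_iff.mp hint
  have hn : n ^ 3 + n ^ 2 - 4 * n + 1 = 0 := by
    rw [eq_intCast] at hroot
    exact_mod_cast hroot
  have hunit : IsUnit n := .of_mul_eq_one (4 - n - n ^ 2) (by linear_combination -hn)
  rcases Int.isUnit_iff.mp hunit with rfl | rfl <;> norm_num at hn

theorem sq_sub_add_one_pow_three_eq {R : Type*} [CommRing R] {r : R}
    (hr : r ^ 3 + r ^ 2 - 4 * r + 1 = 0) :
    (r ^ 2 - r + 1) ^ 3 = 13 * (r * (1 - r)) ^ 2 := by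
  linear_combination (r ^ 3 - 4 * r ^ 2 + r + 1) * hr

theorem thirteen_pow_div_sq_sub_add_one_pow {F : Type*} [Field F] (h13 : (13 : F) ≠ 0) {r : F}
    (hr : r ^ 3 + r ^ 2 - 4 * r + 1 = 0) :
    13 ^ 4 / (r ^ 2 - r + 1) ^ 12 = (r * (1 - r)) ^ (-8 : ℤ) := by
  rw [show (r ^ 2 - r + 1) ^ 12 = ((r ^ 2 - r + 1) ^ 3) ^ 4 by ring, sq_sub_add_one_pow_three_eq hr,
    mul_pow, ← pow_mul, div_mul_cancel_left₀ (pow_ne_zero 4 h13), zpow_neg]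
  norm_cast

/-- With `r = ρ`, this is `∏ (X - (1 - ζ ^ k))` over `k ∈ {1, 5, 8, 12}`, the orbit of `ζ` under
`Gal(ℚ(ζ) / ℚ(ρ))`. -/
noncomputable def periodQuartic {R : Type*} [CommRing R] (r : R) : R[X] :=
  X ^ 4 + C (r - 4) * X ^ 3 + C (r ^ 2 - 2 * r + 5) * X ^ 2 + C (-2 * r ^ 2 + 2 * r - 2) * X
    + C (r ^ 2 - r + 1)

section PeriodQuartic

variable {R : Type*} [CommRing R] (r : R)

theorem monic_periodQuartic : (periodQuartic r).Monic := by
  unfold periodQuartic; monicity!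

theorem natDegree_periodQuartic [Nontrivial R] : (periodQuartic r).natDegree = 4 := by
  unfold periodQuartic; compute_degree!

theorem coeff_zero_periodQuartic : (periodQuartic r).coeff 0 = r ^ 2 - r + 1 := by
  simp only [periodQuartic, coeff_add, coeff_C_mul_X_pow, coeff_C_mul_X, coeff_X_pow,
    coeff_C_zero]
  norm_num

end PeriodQuartic

section GaussPeriod

variable {L : Type*} [Field L] {ζ : L}

def gaussPeriod (ζ : L) : L := ζ + ζ⁻¹ + ζ ^ 5 + (ζ ^ 5)⁻¹

theorem IsPrimitiveRoot.sum_pow_thirteen (hζ : IsPrimitiveRoot ζ 13) :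
    1 + ζ + ζ ^ 2 + ζ ^ 3 + ζ ^ 4 + ζ ^ 5 + ζ ^ 6 + ζ ^ 7 + ζ ^ 8 + ζ ^ 9 + ζ ^ 10 + ζ ^ 11
      + ζ ^ 12 = 0 := by
  simpa [Finset.sum_range_succ] using hζ.geom_sum_eq_zero (by norm_num)

theorem gaussPeriod_eq (hζ : IsPrimitiveRoot ζ 13) :
    gaussPeriod ζ = ζ + ζ ^ 12 + ζ ^ 5 + ζ ^ 8 := by
  have h13 := hζ.pow_eq_one
  rw [gaussPeriod, inv_eq_of_mul_eq_one_left (a := ζ ^ 12) (by linear_combination h13),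
    inv_eq_of_mul_eq_one_left (a := ζ ^ 8) (by linear_combination h13)]

theorem gaussPeriod_cubic (hζ : IsPrimitiveRoot ζ 13) :
    gaussPeriod ζ ^ 3 + gaussPeriod ζ ^ 2 - 4 * gaussPeriod ζ + 1 = 0 := by
  rw [gaussPeriod_eq hζ]
  linear_combination (4 + 9 * ζ + 4 * ζ ^ 2 + 4 * ζ ^ 3 + 5 * ζ ^ 4 + 9 * ζ ^ 5 + 3 * ζ ^ 6
    + 2 * ζ ^ 7 + 9 * ζ ^ 8 + 3 * ζ ^ 9 + ζ ^ 10 + 2 * ζ ^ 11 + 9 * ζ ^ 12 + 3 * ζ ^ 15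
    + 3 * ζ ^ 16 + 3 * ζ ^ 19 + ζ ^ 23) * hζ.pow_eq_one + 5 * hζ.sum_pow_thirteen

variable [Algebra ℚ L]

theorem aeval_gaussPeriod (hζ : IsPrimitiveRoot ζ 13) :
    aeval (gaussPeriod ζ) periodCubic = 0 := by
  simp only [periodCubic, map_add, map_sub, map_mul, map_pow, aeval_X, map_ofNat, map_one]
  exact gaussPeriod_cubic hζ

theorem minpoly_gaussPeriod (hζ : IsPrimitiveRoot ζ 13) :
    minpoly ℚ (gaussPeriod ζ) = periodCubic :=
  (minpoly.eq_of_irreducible_of_monic irreducible_periodCubic (aeval_gaussPeriod hζ)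
    monic_periodCubic).symm

theorem finrank_adjoin_gaussPeriod (hζ : IsPrimitiveRoot ζ 13) :
    Module.finrank ℚ ℚ⟮gaussPeriod ζ⟯ = 3 := by
  rw [adjoin.finrank ⟨_, monic_periodCubic, aeval_gaussPeriod hζ⟩, minpoly_gaussPeriod hζ,
    natDegree_periodCubic]

theorem aeval_one_sub_periodQuartic (hζ : IsPrimitiveRoot ζ 13) :
    aeval (1 - ζ) (periodQuartic (AdjoinSimple.gen ℚ (gaussPeriod ζ))) = 0 := by
  simp only [periodQuartic, map_add, map_mul, map_pow, aeval_X, aeval_C, map_sub, map_neg,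
    map_ofNat, map_one, AdjoinSimple.algebraMap_gen, gaussPeriod_eq hζ]
  linear_combination (ζ + 3 * ζ ^ 2 + ζ ^ 5 + 2 * ζ ^ 6 + 2 * ζ ^ 9 + ζ ^ 13) * hζ.pow_eq_one
    + hζ.sum_pow_thirteen

variable [IsCyclotomicExtension {13} ℚ L]

theorem IsCyclotomicExtension.finrank_thirteen : Module.finrank ℚ L = 12 := by
  rw [IsCyclotomicExtension.finrank (n := 13) L (cyclotomic.irreducible_rat (by norm_num)),
    Nat.totient_prime (by norm_num)]

theorem finrank_over_adjoin_gaussPeriod (hζ : IsPrimitiveRoot ζ 13) :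
    Module.finrank ℚ⟮gaussPeriod ζ⟯ L = 4 := by
  have := IsCyclotomicExtension.finiteDimensional {13} ℚ L
  have h := Module.finrank_mul_finrank ℚ ℚ⟮gaussPeriod ζ⟯ L
  rw [finrank_adjoin_gaussPeriod hζ, IsCyclotomicExtension.finrank_thirteen] at h
  omega

theorem norm_one_sub (hζ : IsPrimitiveRoot ζ 13) :
    Algebra.norm ℚ⟮gaussPeriod ζ⟯ (1 - ζ) =
      AdjoinSimple.gen ℚ (gaussPeriod ζ) ^ 2 - AdjoinSimple.gen ℚ (gaussPeriod ζ) + 1 := by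
  have htop : Algebra.adjoin ℚ⟮gaussPeriod ζ⟯ {1 - ζ} = ⊤ :=
    Algebra.adjoin_one_sub_eq_top (IsCyclotomicExtension.adjoin_primitive_root_eq_top (A := ℚ) hζ)
  rw [Algebra.norm_eq_coeff_zero_of_adjoin_eq_top (K := ℚ⟮gaussPeriod ζ⟯) htop
    (monic_periodQuartic _) (aeval_one_sub_periodQuartic hζ)
    ((natDegree_periodQuartic _).trans (finrank_over_adjoin_gaussPeriod hζ).symm),
    natDegree_periodQuartic, coeff_zero_periodQuartic]
  ring

theorem norm_thirteen_div_one_sub_pow (hζ : IsPrimitiveRoot ζ 13) :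
    Algebra.norm ℚ⟮gaussPeriod ζ⟯ (13 / (1 - ζ) ^ 12) =
      (AdjoinSimple.gen ℚ (gaussPeriod ζ) * (1 - AdjoinSimple.gen ℚ (gaussPeriod ζ))) ^
        (-8 : ℤ) := by
  have := IsCyclotomicExtension.finiteDimensional {13} ℚ L
  set r := AdjoinSimple.gen ℚ (gaussPeriod ζ)
  have hcubic : r ^ 3 + r ^ 2 - 4 * r + 1 = 0 :=
    (algebraMap ℚ⟮gaussPeriod ζ⟯ L).injective <| by
      simpa only [map_add, map_sub, map_mul, map_pow, map_ofNat, map_one, map_zero, r,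
        AdjoinSimple.algebraMap_gen] using gaussPeriod_cubic hζ
  rw [div_eq_mul_inv, map_mul, Algebra.norm_inv, map_pow, norm_one_sub hζ,
    ← map_ofNat (algebraMap ℚ⟮gaussPeriod ζ⟯ L) 13, Algebra.norm_algebraMap,
    finrank_over_adjoin_gaussPeriod hζ, ← div_eq_mul_inv]
  exact thirteen_pow_div_sq_sub_add_one_pow (by norm_num) hcubic

end GaussPeriod

/-- Let `ζ` be a primitive 13th root of unity and `K = ℚ(ρ)` the cubic subfield of
`L = ℚ(ζ)`, where `ρ = ζ + ζ⁻¹ + ζ⁵ + ζ⁻⁵`. Then the relative norm from `L` to `K`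
of `μ₀ = 13/(1 − ζ)^12` equals `(ρ(1 − ρ))⁻⁸`. -/
theorem norm_mu0_eq
    (ζ : CyclotomicField 13 ℚ) (hζ : IsPrimitiveRoot ζ 13) :
    ((Algebra.norm ℚ⟮ζ + ζ⁻¹ + ζ ^ 5 + (ζ ^ 5)⁻¹⟯
        ((13 : CyclotomicField 13 ℚ) / (1 - ζ) ^ 12) : ℚ⟮ζ + ζ⁻¹ + ζ ^ 5 + (ζ ^ 5)⁻¹⟯) :
          CyclotomicField 13 ℚ) =
      ((ζ + ζ⁻¹ + ζ ^ 5 + (ζ ^ 5)⁻¹) * (1 - (ζ + ζ⁻¹ + ζ ^ 5 + (ζ ^ 5)⁻¹))) ^ (-8 : ℤ) := by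
  -- The library instance is stated for a `ℚ`-algebra structure that agrees with the synthesized
  -- one only up to unfolding.
  have : IsCyclotomicExtension {13} ℚ (CyclotomicField 13 ℚ) :=
    CyclotomicField.isCyclotomicExtension 13 ℚ
  have h := congrArg (algebraMap ℚ⟮gaussPeriod ζ⟯ (CyclotomicField 13 ℚ))
    (norm_thirteen_div_one_sub_pow hζ)
  rwa [map_zpow₀, map_mul, map_sub, map_one, AdjoinSimple.algebraMap_gen] at h
end

section
/- Let a, b be coprime integers with 13 ∤ a + b, and suppose a^13 + b^13 = c^p for some integer c and odd prime p. Then a + b = δ^p for some integer δ. -/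
/-- If `a, b` are coprime integers with `13 ∤ a + b` and `a^13 + b^13 = c^p` for some
integer `c` and odd prime `p`, then `a + b` is a `p`-th power. -/
theorem sum_is_pth_power
    (a b c : ℤ) (p : ℕ) (hp : p.Prime) (hodd : Odd p)
    (hab : IsCoprime a b) (h13 : ¬ (13 : ℤ) ∣ a + b)
    (h : a ^ 13 + b ^ 13 = c ^ p) :
    ∃ δ : ℤ, a + b = δ ^ p := by
  rcases eq_or_ne (a + b) 0 with h0 | h0
  · exact ⟨0, by rw [h0, zero_pow hp.ne_zero]⟩
  set t : ℤ := a^12 - a^11*b + a^10*b^2 - a^9*b^3 + a^8*b^4 - a^7*b^5 + a^6*b^6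
      - a^5*b^7 + a^4*b^8 - a^3*b^9 + a^2*b^10 - a*b^11 + b^12 with ht
  have hmul : (a + b) * t = c ^ p := by rw [← h, ht]; ring
  have hk : t = 13 * a^12 + (a + b) * (b^11 - 2*a*b^10 + 3*a^2*b^9 - 4*a^3*b^8
      + 5*a^4*b^7 - 6*a^5*b^6 + 7*a^6*b^5 - 8*a^7*b^4 + 9*a^8*b^3 - 10*a^9*b^2
      + 11*a^10*b - 12*a^11) := by rw [ht]; ring
  have hcop13 : IsCoprime (a + b) (13 : ℤ) :=
    ((Prime.coprime_iff_not_dvd (by norm_num : Prime (13:ℤ))).mpr h13).symm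
  have hcopa : IsCoprime (a + b) a := by
    have := hab.symm.add_mul_left_left 1
    simpa [mul_one, add_comm] using this
  have hcopt : IsCoprime (a + b) t := by
    rw [hk]
    exact (hcop13.mul_right (hcopa.pow_right)).add_mul_left_right _
  have hgcd : IsUnit (gcd (a + b) t) :=
    hcopt.isUnit_of_dvd' (gcd_dvd_left _ _) (gcd_dvd_right _ _)
  obtain ⟨d, hd⟩ := exists_associated_pow_of_mul_eq_pow hgcd hmul
  obtain ⟨u, hu⟩ := hd
  rcases Int.isUnit_iff.mp u.isUnit with h1 | h1
  · exact ⟨d, by rw [← hu, h1, mul_one]⟩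
  · refine ⟨-d, ?_⟩
    rw [← hu, h1, hodd.neg_pow, mul_neg_one]
end

section
/- Let a, b be coprime integers with a + b ≠ 0 and 13 ∣ a + b, and suppose a^13 + b^13 = c^p for some integer c and odd prime p. Then there exist an integer δ and an integer j ≥ 1 such that a + b = 13^{pj−1}·δ^p. -/
/-!
Write `a ^ q + b ^ q = (a + b) * Q` with `Q = ∑ aⁱ (-b)^(q-1-i)`. A prime dividing both `a + b`
and `Q` divides `q * b ^ (q - 1)`, hence is `± q` by coprimality, and by lifting the exponent
`q ∥ Q`. So after removing the powers of `q`, `a + b = q ^ α * s` and `Q = q * Q'` with `s, Q'`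
coprime and `q ^ (α + 1) * (s * Q') = c ^ p`. Comparing `q`-adic valuations gives
`α + 1 = p * j`, and `s * Q'` is a `p`-th power, hence so is `s` since `p` is odd.
-/

open Finset

theorem add_mul_geom_sum₂_neg {R : Type*} [CommRing R] {n : ℕ} (hn : Odd n) (a b : R) :
    (a + b) * ∑ i ∈ range n, a ^ i * (-b) ^ (n - 1 - i) = a ^ n + b ^ n := by
  rw [mul_comm, ← sub_neg_eq_add a b, geom_sum₂_mul, hn.neg_pow, sub_neg_eq_add]

theorem IsCoprime.not_dvd_left_of_dvd_add {R : Type*} [CommRing R] {a b r : R}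
    (hab : IsCoprime a b) (hr : ¬IsUnit r) (hs : r ∣ a + b) : ¬r ∣ a := fun ha =>
  hr (hab.isUnit_of_dvd' ha ((dvd_add_right ha).mp hs))

theorem IsCoprime.dvd_of_dvd_add_of_dvd_geom_sum₂_neg {R : Type*} [CommRing R] {a b r : R}
    {n : ℕ} (hab : IsCoprime a b) (hr : Prime r) (hs : r ∣ a + b)
    (hQ : r ∣ ∑ i ∈ range n, a ^ i * (-b) ^ (n - 1 - i)) : r ∣ n := by
  rw [dvd_geom_sum₂_iff_of_dvd_sub (by rwa [sub_neg_eq_add])] at hQ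
  refine (hr.dvd_or_dvd hQ).resolve_right fun hb => ?_
  rw [add_comm] at hs
  exact hab.symm.not_dvd_left_of_dvd_add hr.not_isUnit hs (dvd_neg.mp (hr.dvd_of_dvd_pow hb))

theorem exists_geom_sum₂_neg_eq_mul_not_dvd {R : Type*} [CommRing R] [IsDomain R] {a b : R}
    {q : ℕ} (hq : Prime (q : R)) (hq_odd : Odd q) (hqab : (q : R) ∣ a + b)
    (hqa : ¬(q : R) ∣ a) :
    ∃ Q', ∑ i ∈ range q, a ^ i * (-b) ^ (q - 1 - i) = q * Q' ∧ ¬(q : R) ∣ Q' := by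
  have hv := emultiplicity_geom_sum₂_eq_one (y := -b) hq hq_odd (by rwa [sub_neg_eq_add]) hqa
  obtain ⟨⟨Q', hQ⟩, hQ2⟩ := emultiplicity_eq_coe.1 (by exact_mod_cast hv)
  rw [pow_one] at hQ
  exact ⟨Q', hQ, fun hd => hQ2 (by rw [hQ, pow_two]; exact mul_dvd_mul_left _ hd)⟩

theorem Prime.eq_of_pow_mul_eq_pow_mul {α : Type*} [CommMonoidWithZero α]
    [IsCancelMulZero α] {q m n : α} {k l : ℕ} (hq : Prime q) (hm : ¬q ∣ m) (hn : ¬q ∣ n)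
    (h : q ^ k * m = q ^ l * n) : k = l := by
  have hv := congrArg (emultiplicity q) h
  simp only [emultiplicity_mul hq, emultiplicity_pow_self_of_prime hq,
    emultiplicity_eq_zero.2 hm, emultiplicity_eq_zero.2 hn, add_zero] at hv
  exact_mod_cast hv

theorem Int.exists_eq_pow_of_prime_pow_mul_eq_pow {q m c : ℤ} {k p : ℕ} (hq : Prime q)
    (hp : p ≠ 0) (hm : ¬q ∣ m) (h : q ^ k * m = c ^ p) : ∃ j d, k = p * j ∧ m = d ^ p := by
  have hc : c ≠ 0 := by
    rintro rfl
    rw [zero_pow hp, mul_eq_zero] at h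
    exact hm (h.resolve_left (pow_ne_zero _ hq.ne_zero) ▸ dvd_zero q)
  obtain ⟨d, hcd, hqd⟩ := (Int.finiteMultiplicity_iff.2
    ⟨mt Int.isUnit_iff_natAbs_eq.2 hq.not_isUnit, hc⟩).exists_eq_pow_mul_and_not_dvd
  rw [hcd, mul_pow, ← pow_mul] at h
  have hk := Prime.eq_of_pow_mul_eq_pow_mul hq hm (mt hq.dvd_of_dvd_pow hqd) h
  refine ⟨_, d, hk.trans (mul_comm _ _), ?_⟩
  rw [hk] at h
  exact mul_left_cancel₀ (pow_ne_zero _ hq.ne_zero) h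

theorem Int.exists_add_eq_pow_mul_pow_of_pow_add_pow_eq_pow {a b c : ℤ} {q p : ℕ}
    (hq : q.Prime) (hq_odd : Odd q) (hp : Odd p) (hab : IsCoprime a b) (hne : a + b ≠ 0)
    (hqab : (q : ℤ) ∣ a + b) (h : a ^ q + b ^ q = c ^ p) :
    ∃ (δ : ℤ) (j : ℕ), 1 ≤ j ∧ a + b = q ^ (p * j - 1) * δ ^ p := by
  have hq' : Prime (q : ℤ) := Nat.prime_iff_prime_int.mp hq
  obtain ⟨s, hs, hqs⟩ := (Int.finiteMultiplicity_iff (a := q).2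
    ⟨by simpa using hq.ne_one, hne⟩).exists_eq_pow_mul_and_not_dvd
  generalize multiplicity (q : ℤ) (a + b) = α at hs
  obtain ⟨Q', hQ, hqQ'⟩ := exists_geom_sum₂_neg_eq_mul_not_dvd hq' hq_odd hqab
    (hab.not_dvd_left_of_dvd_add hq'.not_isUnit hqab)
  have hcop : IsCoprime s Q' := by
    refine isCoprime_of_prime_dvd (fun h0 => hqs (h0.1 ▸ dvd_zero _)) fun r hr hrs hrQ' => ?_
    have hrq : r ∣ q := hab.dvd_of_dvd_add_of_dvd_geom_sum₂_neg hr
      (hs ▸ hrs.mul_left _) (hQ ▸ hrQ'.mul_left _)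
    exact hqs (((hr.associated_of_dvd hq' hrq).dvd_iff_dvd_left).mp hrs)
  have hsplit : (q : ℤ) ^ (α + 1) * (s * Q') = c ^ p := by
    rw [← h, ← add_mul_geom_sum₂_neg hq_odd, hs, hQ]
    ring
  obtain ⟨j, d, hj, hd⟩ := Int.exists_eq_pow_of_prime_pow_mul_eq_pow hq' hp.pos.ne'
    (hq'.not_dvd_mul hqs hqQ') hsplit
  obtain ⟨δ, hδ⟩ := Int.eq_pow_of_mul_eq_pow_odd_left hcop hp hd
  refine ⟨δ, j, Nat.pos_of_ne_zero (by rintro rfl; omega), ?_⟩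
  rw [hs, hδ, show α = p * j - 1 by omega]

theorem sum_is_thirteen_power_times_pth_power_general
    (a b c : ℤ) (p : ℕ) (hodd : Odd p)
    (hab : IsCoprime a b) (hne : a + b ≠ 0) (h13 : (13 : ℤ) ∣ a + b)
    (h : a ^ 13 + b ^ 13 = c ^ p) :
    ∃ (δ : ℤ) (j : ℕ), 1 ≤ j ∧ a + b = 13 ^ (p * j - 1) * δ ^ p :=
  Int.exists_add_eq_pow_mul_pow_of_pow_add_pow_eq_pow (q := 13) (by norm_num) (by decide) hodd
    hab hne h13 h

/-- If `a, b` are coprime integers with `a + b ≠ 0`, `13 ∣ a + b` and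
`a^13 + b^13 = c^p` for some integer `c` and odd prime `p`, then
`a + b = 13^(pj−1)·δ^p` for some integer `δ` and some integer `j ≥ 1`. -/
theorem sum_is_thirteen_power_times_pth_power
    (a b c : ℤ) (p : ℕ) (hp : p.Prime) (hodd : Odd p)
    (hab : IsCoprime a b) (hne : a + b ≠ 0) (h13 : (13 : ℤ) ∣ a + b)
    (h : a ^ 13 + b ^ 13 = c ^ p) :
    ∃ (δ : ℤ) (j : ℕ), 1 ≤ j ∧ a + b = 13 ^ (p * j - 1) * δ ^ p :=
  sum_is_thirteen_power_times_pth_power_general a b c p hodd hab hne h13 h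
end

section
/- Let ζ be a primitive 13th root of unity and let 𝔭₁₃ be the unique prime of ℚ(ζ) above 13, with valuation v normalized so that v(13) = 12. If a, b are coprime integers with 13 ∣ a + b, then v(a + ζ^k b) = 1 for all k with 1 ≤ k ≤ 12. -/
/-!
The element `π = ζ - 1` is prime and `(π) ^ (p - 1) = (p)`, so a prime ideal containing `p` is
`(π)`. Write `a + ζ ^ k b = (a + b) + (ζ ^ k - 1) b`: the first summand is divisible
by `p`, hence by `π ^ 2` once `p ≠ 2`, while `ζ ^ k - 1` is `π` times a unit and `π ∤ b`
because `p ∤ b`.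
-/

open NumberField

theorem intCast_add_mul_eq_intCast_add_add_sub_one_mul {R : Type*} [CommRing R] (a b : ℤ)
    (x : R) : (a : R) + x * b = ((a + b : ℤ) : R) + (x - 1) * b := by
  push_cast
  ring

theorem IsCoprime.not_dvd_right_of_dvd_add {R : Type*} [CommRing R] {a b c : R}
    (hab : IsCoprime a b) (hc : ¬IsUnit c) (h : c ∣ a + b) : ¬c ∣ b :=
  fun hb ↦ hc (hab.isUnit_of_dvd' ((dvd_add_left hb).mp h) hb)

namespace IsPrimitiveRoot

open Ideal IsCyclotomicExtension.Rat

variable {p : ℕ} [hp : Fact p.Prime] {K : Type*} [Field K] [NumberField K]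
  [IsCyclotomicExtension {p} ℚ K] {ζ : K} (hζ : IsPrimitiveRoot ζ p)
include hζ

theorem eq_span_toInteger_sub_one_of_natCast_mem {P : Ideal (𝓞 K)} (hP : P.IsPrime)
    (hpP : (p : 𝓞 K) ∈ P) : P = span {hζ.toInteger - 1} := by
  have hmem : hζ.toInteger - 1 ∈ P :=
    hP.mem_of_pow_mem _ <| P.mem_of_dvd (associated_zeta_sub_one_pow_prime p hζ).symm.dvd hpP
  have hmax : (span {hζ.toInteger - 1}).IsMaximal :=
    (isPrime_span_zeta_sub_one' p hζ).isMaximal <|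
      span_singleton_eq_bot.not.mpr hζ.zeta_sub_one_prime'.ne_zero
  exact (hmax.eq_of_le hP.ne_top ((span_singleton_le_iff_mem _).mpr hmem)).symm

theorem toInteger_sub_one_dvd_intCast_add_pow_mul {a b : ℤ} (hsum : (p : ℤ) ∣ a + b)
    (k : ℕ) : hζ.toInteger - 1 ∣ (a : 𝓞 K) + hζ.toInteger ^ k * b := by
  rw [intCast_add_mul_eq_intCast_add_add_sub_one_mul]
  refine dvd_add ((zeta_sub_one_dvd_intCast_iff' p hζ).mpr hsum) (Dvd.dvd.mul_right ?_ _)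
  simpa using sub_dvd_pow_sub_pow hζ.toInteger 1 k

theorem not_toInteger_sub_one_sq_dvd_intCast_add_pow_mul (hp2 : p ≠ 2) {a b : ℤ}
    (hab : IsCoprime a b) (hsum : (p : ℤ) ∣ a + b) {k : ℕ} (hk : ¬p ∣ k) :
    ¬(hζ.toInteger - 1) ^ 2 ∣ (a : 𝓞 K) + hζ.toInteger ^ k * b := by
  set π := hζ.toInteger - 1
  have hπ : Prime π := hζ.zeta_sub_one_prime'
  have hsq_dvd_p : π ^ 2 ∣ (p : 𝓞 K) :=
    (pow_dvd_pow π (by have := hp.out.two_le; omega)).trans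
      (associated_zeta_sub_one_pow_prime p hζ).dvd
  have hsq_dvd_sum : π ^ 2 ∣ ((a + b : ℤ) : 𝓞 K) :=
    hsq_dvd_p.trans (by exact_mod_cast Int.cast_dvd_cast _ _ hsum)
  have hπk : Associated π (hζ.toInteger ^ k - 1) :=
    hζ.toInteger_isPrimitiveRoot.associated_sub_one_pow_sub_one_of_coprime
      ((hp.out.coprime_iff_not_dvd.mpr hk).symm)
  intro h
  rw [intCast_add_mul_eq_intCast_add_add_sub_one_mul, dvd_add_right hsq_dvd_sum, pow_two,
    ← (hπk.mul_right (b : 𝓞 K)).dvd_iff_dvd_right, mul_dvd_mul_iff_left hπ.ne_zero,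
    zeta_sub_one_dvd_intCast_iff' p hζ] at h
  exact hab.not_dvd_right_of_dvd_add (by simpa [Int.isUnit_iff] using hp.out.ne_one) hsum h

end IsPrimitiveRoot

theorem valuation_of_factors_eq_one_general
    (ζ : 𝓞 (CyclotomicField 13 ℚ)) (hζ : IsPrimitiveRoot ζ 13)
    (𝔭 : Ideal (𝓞 (CyclotomicField 13 ℚ))) (h𝔭 : 𝔭.IsPrime)
    (h13a : 𝔭 ^ 12 ∣ Ideal.span {(13 : 𝓞 (CyclotomicField 13 ℚ))})
    (a b : ℤ) (hab : IsCoprime a b) (hsum : (13 : ℤ) ∣ a + b)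
    (k : ℕ) (hk1 : 1 ≤ k) (hk2 : k ≤ 12) :
    𝔭 ∣ Ideal.span {(a : 𝓞 (CyclotomicField 13 ℚ)) + ζ ^ k * b} ∧
      ¬ 𝔭 ^ 2 ∣ Ideal.span {(a : 𝓞 (CyclotomicField 13 ℚ)) + ζ ^ k * b} := by
  have : Fact (Nat.Prime 13) := ⟨by norm_num⟩
  have : IsCyclotomicExtension {13} ℚ (CyclotomicField 13 ℚ) :=
    CyclotomicField.isCyclotomicExtension 13 ℚ
  have hζK : IsPrimitiveRoot (ζ : CyclotomicField 13 ℚ) 13 :=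
    hζ.map_of_injective RingOfIntegers.coe_injective
  have h13 : ((13 : ℕ) : 𝓞 (CyclotomicField 13 ℚ)) ∈ 𝔭 :=
    Ideal.dvd_span_singleton.mp <|
      (dvd_pow_self 𝔭 (n := 12) (by norm_num)).trans (by exact_mod_cast h13a)
  have hk : ¬13 ∣ k := fun h ↦ by have := Nat.le_of_dvd (by omega) h; omega
  rw [hζK.eq_span_toInteger_sub_one_of_natCast_mem h𝔭 h13, Ideal.span_singleton_pow,
    Ideal.dvd_span_singleton, Ideal.dvd_span_singleton, Ideal.mem_span_singleton,
    Ideal.mem_span_singleton]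
  exact ⟨hζK.toInteger_sub_one_dvd_intCast_add_pow_mul (by exact_mod_cast hsum) k,
    hζK.not_toInteger_sub_one_sq_dvd_intCast_add_pow_mul (by norm_num) hab
      (by exact_mod_cast hsum) hk⟩

/-- Let `ζ` be a primitive 13th root of unity in the ring of integers of `ℚ(ζ₁₃)` and
let `𝔭₁₃` be the unique prime above `13`, with the valuation normalized so that
`v(13) = 12` (i.e. `𝔭₁₃^12` exactly divides `(13)`). If `a, b` are coprime integers
with `13 ∣ a + b`, then `v(a + ζ^k b) = 1` for all `1 ≤ k ≤ 12`, i.e. `𝔭₁₃`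
divides `(a + ζ^k b)` but `𝔭₁₃²` does not. -/
theorem valuation_of_factors_eq_one
    (ζ : 𝓞 (CyclotomicField 13 ℚ)) (hζ : IsPrimitiveRoot ζ 13)
    (𝔭 : Ideal (𝓞 (CyclotomicField 13 ℚ))) (h𝔭 : 𝔭.IsPrime) (h𝔭ne : 𝔭 ≠ ⊥)
    (h13a : 𝔭 ^ 12 ∣ Ideal.span {(13 : 𝓞 (CyclotomicField 13 ℚ))})
    (h13b : ¬ 𝔭 ^ 13 ∣ Ideal.span {(13 : 𝓞 (CyclotomicField 13 ℚ))})
    (a b : ℤ) (hab : IsCoprime a b) (hsum : (13 : ℤ) ∣ a + b)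
    (k : ℕ) (hk1 : 1 ≤ k) (hk2 : k ≤ 12) :
    𝔭 ∣ Ideal.span {(a : 𝓞 (CyclotomicField 13 ℚ)) + ζ ^ k * b} ∧
      ¬ 𝔭 ^ 2 ∣ Ideal.span {(a : 𝓞 (CyclotomicField 13 ℚ)) + ζ ^ k * b} :=
  valuation_of_factors_eq_one_general ζ hζ 𝔭 h𝔭 h13a a b hab hsum k hk1 hk2
end

section
/- Let ζ be a primitive 13th root of unity and let a, b be coprime integers. For 1 ≤ j < k ≤ 12, any common prime ideal divisor of (a + ζ^j b) and (a + ζ^k b) in ℤ[ζ] lies above 13. -/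
/-!
Coprimality of `a` and `b` turns the two memberships into `ζ ^ j - ζ ^ k ∈ P`. Up to the unit
`-ζ ^ j` this is `ζ ^ (k - j) - 1`, and `ζ ^ (k - j)` is a 13th root of unity other than `1`, so
`ζ ^ (k - j) - 1` divides `13 = ∑ i < 13, (1 - ζ ^ ((k - j) * i))`.
-/

open NumberField

theorem Ideal.sub_mem_of_add_mul_mem_of_isCoprime {R : Type*} [CommRing R] {I : Ideal R}
    {a b x y : R} (hab : IsCoprime a b) (hx : a + x * b ∈ I) (hy : a + y * b ∈ I) :
    x - y ∈ I := by
  obtain ⟨u, v, huv⟩ := hab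
  -- `x - y = (x - y) * (u * a + v * b)`, and both `(x - y) * a` and `(x - y) * b` lie in `I`.
  have key : x - y = (u * x - v) * (a + y * b) + (v - u * y) * (a + x * b) := by
    linear_combination (x - y) * huv.symm
  rw [key]
  exact I.add_mem (I.mul_mem_left _ hy) (I.mul_mem_left _ hx)

theorem IsPrimitiveRoot.natCast_mem_of_pow_sub_pow_mem {R : Type*} [CommRing R] [IsDomain R]
    {ζ : R} {n j k : ℕ} {I : Ideal R} (hζ : IsPrimitiveRoot ζ n) (hjk : j < k) (hkn : k < j + n)
    (h : ζ ^ j - ζ ^ k ∈ I) : (n : R) ∈ I := by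
  obtain ⟨m, rfl⟩ := Nat.exists_eq_add_of_lt hjk
  have hfactor : ζ ^ j - ζ ^ (j + m + 1) = -ζ ^ j * (ζ ^ (m + 1) - 1) := by ring
  have hunit : IsUnit (-ζ ^ j) := ((hζ.isUnit (by omega)).pow j).neg
  rw [hfactor, Ideal.unit_mul_mem_iff_mem I hunit] at h
  have hroot : (ζ ^ (m + 1)) ^ n = 1 := by
    rw [← pow_mul, mul_comm, pow_mul, hζ.pow_eq_one, one_pow]
  have hne : ζ ^ (m + 1) ≠ 1 := hζ.pow_ne_one_of_pos_of_lt (by omega) (by omega)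
  exact I.mem_of_dvd (sub_one_dvd_natCast_of_pow_eq_one hroot hne) h

theorem common_prime_divisor_lies_above_thirteen_general
    (ζ : 𝓞 (CyclotomicField 13 ℚ)) (hζ : IsPrimitiveRoot ζ 13)
    (a b : ℤ) (hab : IsCoprime a b)
    (j k : ℕ) (hjk : j < k) (hk : k ≤ 12)
    (P : Ideal (𝓞 (CyclotomicField 13 ℚ)))
    (hPj : (a : 𝓞 (CyclotomicField 13 ℚ)) + ζ ^ j * b ∈ P)
    (hPk : (a : 𝓞 (CyclotomicField 13 ℚ)) + ζ ^ k * b ∈ P) :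
    (13 : 𝓞 (CyclotomicField 13 ℚ)) ∈ P := by
  have hdiff := P.sub_mem_of_add_mul_mem_of_isCoprime hab.intCast hPj hPk
  exact_mod_cast hζ.natCast_mem_of_pow_sub_pow_mem hjk (by omega) hdiff

/-- Let `ζ` be a primitive 13th root of unity and `a, b` coprime integers. For
`1 ≤ j < k ≤ 12`, any (nonzero) prime ideal of `ℤ[ζ]` containing both `a + ζ^j b`
and `a + ζ^k b` lies above `13`. -/
theorem common_prime_divisor_lies_above_thirteen
    (ζ : 𝓞 (CyclotomicField 13 ℚ)) (hζ : IsPrimitiveRoot ζ 13)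
    (a b : ℤ) (hab : IsCoprime a b)
    (j k : ℕ) (hj : 1 ≤ j) (hjk : j < k) (hk : k ≤ 12)
    (P : Ideal (𝓞 (CyclotomicField 13 ℚ))) (hP : P.IsPrime) (hPne : P ≠ ⊥)
    (hPj : (a : 𝓞 (CyclotomicField 13 ℚ)) + ζ ^ j * b ∈ P)
    (hPk : (a : 𝓞 (CyclotomicField 13 ℚ)) + ζ ^ k * b ∈ P) :
    (13 : 𝓞 (CyclotomicField 13 ℚ)) ∈ P :=
  common_prime_divisor_lies_above_thirteen_general ζ hζ a b hab j k hjk hk P hPj hPk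
end

section
/- Let ρ satisfy ρ³ + ρ² − 4ρ + 1 = 0 and set F(x,y) = x⁴ + ρx³y + (ρ²+ρ−1)x²y² + ρxy³ + y⁴ over K = ℚ(ρ). Then N(x,y) := F(x,y)·σ(F)(x,y)·σ²(F)(x,y) = (x^13 + y^13)/(x + y) in K[x,y], where σ generates Gal(K/ℚ) acting on coefficients. -/
private lemma aux_phi13 {K : Type*} [Field K] (a b c x y : K)
    (h1 : a + b + c + 1 = 0)
    (h2 : b ^ 2 + b * c + c ^ 2 + b + c - 4 = 0)
    (h3 : c ^ 3 + c ^ 2 - 4 * c + 1 = 0) :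
    (x ^ 4 + a * x ^ 3 * y + (a ^ 2 + a - 1) * x ^ 2 * y ^ 2 + a * x * y ^ 3 + y ^ 4) *
      (x ^ 4 + b * x ^ 3 * y + (b ^ 2 + b - 1) * x ^ 2 * y ^ 2 + b * x * y ^ 3 + y ^ 4) *
      (x ^ 4 + c * x ^ 3 * y + (c ^ 2 + c - 1) * x ^ 2 * y ^ 2 + c * x * y ^ 3 + y ^ 4) =
      ∑ i ∈ Finset.range 13, (-1 : K) ^ i * x ^ (12 - i) * y ^ i := by
  have hs : (∑ i ∈ Finset.range 13, (-1 : K) ^ i * x ^ (12 - i) * y ^ i) =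
      x^12 - x^11*y + x^10*y^2 - x^9*y^3 + x^8*y^4 - x^7*y^5 + x^6*y^6
        - x^5*y^7 + x^4*y^8 - x^3*y^9 + x^2*y^10 - x*y^11 + y^12 := by
    simp [Finset.sum_range_succ]; ring
  rw [hs]
  linear_combination ((1 : K) * a * b^2 * c^2 * x^6 * y^6 + (1 : K) * a * b^2 * c * x^7 * y^5 + (1 : K) * a * b^2 * c * x^6 * y^6 + (1 : K) * a * b^2 * c * x^5 * y^7 + (1 : K) * a * b^2 * x^8 * y^4 - (1 : K) * a * b^2 * x^6 * y^6 + (1 : K) * a * b^2 * x^4 * y^8 + (1 : K) * a * b * c^2 * x^7 * y^5 + (1 : K) * a * b * c^2 * x^6 * y^6 + (1 : K) * a * b * c^2 * x^5 * y^7 + (1 : K) * a * b * c * x^8 * y^4 + (2 : K) * a * b * c * x^7 * y^5 + (3 : K) * a * b * c * x^6 * y^6 + (2 : K) * a * b * c * x^5 * y^7 + (1 : K) * a * b * c * x^4 * y^8 + (1 : K) * a * b * x^9 * y^3 + (1 : K) * a * b * x^8 * y^4 - (1 : K) * a * b * x^6 * y^6 + (1 : K) * a * b * x^4 * y^8 +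 (1 : K) * a * b * x^3 * y^9 + (1 : K) * a * c^2 * x^8 * y^4 - (1 : K) * a * c^2 * x^6 * y^6 + (1 : K) * a * c^2 * x^4 * y^8 + (1 : K) * a * c * x^9 * y^3 + (1 : K) * a * c * x^8 * y^4 - (1 : K) * a * c * x^6 * y^6 + (1 : K) * a * c * x^4 * y^8 + (1 : K) * a * c * x^3 * y^9 + (1 : K) * a * x^10 * y^2 - (2 : K) * a * x^8 * y^4 + (3 : K) * a * x^6 * y^6 - (2 : K) * a * x^4 * y^8 + (1 : K) * a * x^2 * y^10 - (1 : K) * b^3 * c^2 * x^6 * y^6 - (1 : K) * b^3 * c * x^7 * y^5 - (1 : K) * b^3 * c * x^6 * y^6 - (1 : K) * b^3 * c * x^5 * y^7 - (1 : K) * b^3 * x^8 * y^4 + (1 : K) * b^3 * x^6 * y^6 - (1 : K) * b^3 * x^4 * y^8 - (1 : K) * b^2 * c^3 * x^6 * y^6 - (1 : K) * b^2 * c^2 * x^7 * y^5 - (2 : K) * b^2 * c^2 * x^6 * y^6 - (1 : K) * b^2 * c^2 * x^5 * y^7 - (1 : K) * b^2 * c * x^8 * y^4 - (1 : K) * b^2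 * c * x^7 * y^5 - (1 : K) * b^2 * c * x^5 * y^7 - (1 : K) * b^2 * c * x^4 * y^8 - (1 : K) * b^2 * x^8 * y^4 + (1 : K) * b^2 * x^6 * y^6 - (1 : K) * b^2 * x^4 * y^8 - (1 : K) * b * c^3 * x^7 * y^5 - (1 : K) * b * c^3 * x^6 * y^6 - (1 : K) * b * c^3 * x^5 * y^7 - (1 : K) * b * c^2 * x^8 * y^4 - (1 : K) * b * c^2 * x^7 * y^5 - (1 : K) * b * c^2 * x^5 * y^7 - (1 : K) * b * c^2 * x^4 * y^8 - (1 : K) * b * c * x^9 * y^3 + (4 : K) * b * c * x^7 * y^5 + (6 : K) * b * c * x^6 * y^6 + (4 : K) * b * c * x^5 * y^7 - (1 : K) * b * c * x^3 * y^9 + (1 : K) * b * x^9 * y^3 + (3 : K) * b * x^8 * y^4 - (3 : K) * b * x^6 * y^6 + (3 : K) * b * x^4 * y^8 + (1 : K) * b * x^3 * y^9 - (1 : K) * c^3 * x^8 * y^4 + (1 : K) * c^3 * x^6 * y^6 - (1 : K) * c^3 * x^4 * y^8 - (1 : K) * c^2 * x^8 * y^4 + (1 : K) * c^2 * x^6 *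 y^6 - (1 : K) * c^2 * x^4 * y^8 + (1 : K) * c * x^9 * y^3 + (3 : K) * c * x^8 * y^4 - (3 : K) * c * x^6 * y^6 + (3 : K) * c * x^4 * y^8 + (1 : K) * c * x^3 * y^9 + (1 : K) * x^11 * y - (1 : K) * x^9 * y^3 + (1 : K) * x^7 * y^5 + (1 : K) * x^5 * y^7 - (1 : K) * x^3 * y^9 + (1 : K) * x * y^11) * h1 + ((1 : K) * b^2 * c^2 * x^6 * y^6 + (1 : K) * b^2 * c * x^7 * y^5 + (1 : K) * b^2 * c * x^6 * y^6 + (1 : K) * b^2 * c * x^5 * y^7 + (1 : K) * b^2 * x^8 * y^4 - (1 : K) * b^2 * x^6 * y^6 + (1 : K) * b^2 * x^4 * y^8 + (1 : K) * b * c^3 * x^6 * y^6 + (1 : K) * b * c^2 * x^7 * y^5 + (2 : K) * b * c^2 * x^6 * y^6 + (1 : K) * b * c^2 * x^5 * y^7 + (1 : K) * b * c * x^8 * y^4 + (1 : K) * b * c * x^7 * y^5 + (1 : K) * b * c * x^5 * y^7 + (1 : K) * b * c * x^4 * y^8 + (1 : K) * b * x^8 * y^4 - (1 : K) * b * x^6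 * y^6 + (1 : K) * b * x^4 * y^8 - (1 : K) * c^4 * x^6 * y^6 - (1 : K) * c^3 * x^6 * y^6 + (1 : K) * c^2 * x^8 * y^4 + (3 : K) * c^2 * x^6 * y^6 + (1 : K) * c^2 * x^4 * y^8 + (2 : K) * c * x^9 * y^3 - (2 : K) * c * x^6 * y^6 + (2 : K) * c * x^3 * y^9 + (1 : K) * x^10 * y^2 - (1 : K) * x^9 * y^3 - (1 : K) * x^8 * y^4 + (2 : K) * x^6 * y^6 - (1 : K) * x^4 * y^8 - (1 : K) * x^3 * y^9 + (1 : K) * x^2 * y^10) * h2 + ((1 : K) * c^3 * x^6 * y^6 + (1 : K) * c^2 * x^6 * y^6 - (4 : K) * c * x^6 * y^6 - (2 : K) * x^9 * y^3 + (1 : K) * x^8 * y^4 + (1 : K) * x^4 * y^8 - (2 : K) * x^3 * y^9) * h3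


/-- Let `K = ℚ(ρ)` with `ρ³ + ρ² − 4ρ + 1 = 0` and `σ` a generator of `Gal(K/ℚ)`
(so `σρ ≠ ρ` and `σ³ρ = ρ`). Writing `F_r(x,y) = x⁴ + rx³y + (r²+r−1)x²y² + rxy³ + y⁴`,
the product of the three Galois conjugates of `F_ρ` equals
`(x¹³ + y¹³)/(x + y) = Σ_{i=0}^{12} (−1)ⁱ x^{12−i} yⁱ`. -/
theorem norm_of_quartic_form_eq_phi13
    {K : Type*} [Field K] [CharZero K] (σ : K ≃ₐ[ℚ] K) (ρ : K)
    (hρ : ρ ^ 3 + ρ ^ 2 - 4 * ρ + 1 = 0)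
    (hσρ : σ ρ ≠ ρ) (hσ3 : σ (σ (σ ρ)) = ρ) (x y : K) :
    (x ^ 4 + ρ * x ^ 3 * y + (ρ ^ 2 + ρ - 1) * x ^ 2 * y ^ 2 + ρ * x * y ^ 3 + y ^ 4) *
      (x ^ 4 + σ ρ * x ^ 3 * y + ((σ ρ) ^ 2 + σ ρ - 1) * x ^ 2 * y ^ 2 +
        σ ρ * x * y ^ 3 + y ^ 4) *
      (x ^ 4 + σ (σ ρ) * x ^ 3 * y + ((σ (σ ρ)) ^ 2 + σ (σ ρ) - 1) * x ^ 2 * y ^ 2 +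
        σ (σ ρ) * x * y ^ 3 + y ^ 4) =
      ∑ i ∈ Finset.range 13, (-1 : K) ^ i * x ^ (12 - i) * y ^ i := by
  set a := ρ with ha
  set b := σ ρ with hb'
  set c := σ (σ ρ) with hc'
  have hb : b ^ 3 + b ^ 2 - 4 * b + 1 = 0 := by
    have h := congrArg σ hρ
    simpa [map_add, map_sub, map_mul, map_pow, map_one, map_zero, map_ofNat] using h
  have hc : c ^ 3 + c ^ 2 - 4 * c + 1 = 0 := by
    have h := congrArg σ hb
    simpa [map_add, map_sub, map_mul, map_pow, map_one, map_zero, map_ofNat] using h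
  have hba : b ≠ a := hσρ
  have hbc : b ≠ c := by
    intro h
    have h2 := congrArg σ h
    rw [hσ3] at h2
    exact hσρ (h.trans h2)
  have hac : a ≠ c := by
    intro h
    have h2 := congrArg σ h
    rw [hσ3] at h2
    exact hσρ h2
  have h2 : b ^ 2 + b * c + c ^ 2 + b + c - 4 = 0 := by
    have e : (b - c) * (b ^ 2 + b * c + c ^ 2 + b + c - 4) = 0 := by
      linear_combination hb - hc
    rcases mul_eq_zero.mp e with h | h
    · exact absurd (sub_eq_zero.mp h) hbc
    · exact h
  have hab : a ^ 2 + a * b + b ^ 2 + a + b - 4 = 0 := by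
    have e : (a - b) * (a ^ 2 + a * b + b ^ 2 + a + b - 4) = 0 := by
      linear_combination hρ - hb
    rcases mul_eq_zero.mp e with h | h
    · exact absurd (sub_eq_zero.mp h).symm hba
    · exact h
  have hac2 : a ^ 2 + a * c + c ^ 2 + a + c - 4 = 0 := by
    have e : (a - c) * (a ^ 2 + a * c + c ^ 2 + a + c - 4) = 0 := by
      linear_combination hρ - hc
    rcases mul_eq_zero.mp e with h | h
    · exact absurd (sub_eq_zero.mp h) hac
    · exact h
  have h1 : a + b + c + 1 = 0 := by
    have e : (b - c) * (a + b + c + 1) = 0 := by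
      linear_combination hab - hac2 - h2 + h2
    rcases mul_eq_zero.mp e with h | h
    · exact absurd (sub_eq_zero.mp h) hbc
    · exact h
  exact aux_phi13 a b c x y h1 h2 hc
end
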